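/- Let $y \in \mathbb{R}^{\mathbb{N}^n_{2d_0}}$ with $y_0 = 1$. If the moment matrix $M_{d_0}[y]$ has rank one (and is positive semidefinite), then $y = [u]_{2d_0}$ for the point $u = (y_{e_1}, \ldots, y_{e_n})$, i.e., $y_\alpha = u^\alpha$ for all $|\alpha| \le 2d_0$. -/
import Mathlib


noncomputable section

/-- Index set of monomial exponents of degree at most `d` in `n` variables. -/
def Idx (n d : ℕ) := {α : Fin n → Fin (d + 1) // ∑ i, (α i : ℕ) ≤ d}

instance (n d : ℕ) : Fintype (Idx n d) := by unfold Idx; infer_instance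

/-- The moment matrix `M_d[y]` of a truncated moment sequence `y`. -/
def momMat (n d : ℕ) (y : (Fin n → ℕ) → ℝ) : Matrix (Idx n d) (Idx n d) ℝ :=
  Matrix.of fun a b => y (fun i => (a.1 i : ℕ) + (b.1 i : ℕ))

/-- The monomial `u^α`. -/
def mono {n : ℕ} (u : Fin n → ℝ) (α : Fin n → ℕ) : ℝ := ∏ i, u i ^ α i

instance (n d : ℕ) : DecidableEq (Idx n d) := by unfold Idx; infer_instance

/-- Embed an exponent of total degree at most `d` into `Idx n d`. -/
def toIdx {n d : ℕ} (β : Fin n → ℕ) (h : ∑ i, β i ≤ d) : Idx n d :=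
  ⟨fun i => ⟨β i, Nat.lt_succ_of_le (le_trans
      (Finset.single_le_sum (f := β) (fun j _ => Nat.zero_le _) (Finset.mem_univ i)) h)⟩,
    by simpa using h⟩

lemma split_deg {n d0 : ℕ} : ∀ s (α : Fin n → ℕ), (∑ i, α i) = s → s ≤ 2 * d0 →
    ∃ β γ : Fin n → ℕ, (∀ i, α i = β i + γ i) ∧ (∑ i, β i) ≤ d0 ∧ (∑ i, γ i) ≤ d0 := by
  intro s
  induction s using Nat.strong_induction_on with
  | _ s ih =>
    intro α hs hle
    by_cases h : s ≤ d0
    · exact ⟨α, 0, fun i => by simp, hs ▸ h, by simp⟩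
    · push_neg at h
      have hpos : 0 < s := lt_of_le_of_lt (Nat.zero_le _) h
      obtain ⟨i, hi⟩ : ∃ i, α i ≠ 0 := by
        by_contra hc
        push_neg at hc
        have : ∑ i, α i = 0 := Finset.sum_eq_zero fun i _ => hc i
        omega
      set α' := Function.update α i (α i - 1) with hα'
      have hcs : ∑ j ∈ Finset.univ \ {i}, α j + α i = s := by
        have h2 := Finset.sum_compl_add_sum ({i} : Finset (Fin n)) α
        simp only [Finset.sum_singleton, Finset.compl_eq_univ_sdiff] at h2
        omega
      have hsum' : ∑ j, α' j = s - 1 := by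
        rw [hα', Finset.sum_update_of_mem (Finset.mem_univ i)]
        omega
      obtain ⟨β, γ, hbg, hb, hg⟩ := ih (s - 1) (by omega) α' hsum' (by omega)
      have hsumbg : (∑ j, β j) + (∑ j, γ j) = s - 1 := by
        rw [← Finset.sum_add_distrib, ← hsum']
        exact Finset.sum_congr rfl fun j _ => (hbg j).symm
      by_cases hc : (∑ j, β j) < d0
      · refine ⟨Function.update β i (β i + 1), γ, fun j => ?_, ?_, hg⟩
        · by_cases hj : j = i
          · subst hj
            have h1 := hbg j
            simp only [Function.update_self, hα'] at h1 ⊢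
            omega
          · have h1 := hbg j
            simp only [Function.update_of_ne hj, hα'] at h1 ⊢
            exact h1
        · rw [Finset.sum_update_of_mem (Finset.mem_univ i)]
          have h2 := Finset.sum_compl_add_sum ({i} : Finset (Fin n)) β
          simp only [Finset.sum_singleton, Finset.compl_eq_univ_sdiff] at h2
          omega
      · have hgc : (∑ j, γ j) < d0 := by omega
        refine ⟨β, Function.update γ i (γ i + 1), fun j => ?_, hb, ?_⟩
        · by_cases hj : j = i
          · subst hj
            have h1 := hbg j
            simp only [Function.update_self, hα'] at h1 ⊢
            omega
          · have h1 := hbg j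
            simp only [Function.update_of_ne hj, hα'] at h1 ⊢
            exact h1
        · rw [Finset.sum_update_of_mem (Finset.mem_univ i)]
          have h2 := Finset.sum_compl_add_sum ({i} : Finset (Fin n)) γ
          simp only [Finset.sum_singleton, Finset.compl_eq_univ_sdiff] at h2
          omega

lemma rank_one_factor {n d : ℕ} (y : (Fin n → ℕ) → ℝ) (hy0 : y 0 = 1)
    (hrank : (momMat n d y).rank = 1) :
    ∀ a b : Fin n → ℕ, (∑ i, a i) ≤ d → (∑ i, b i) ≤ d →
      y (fun i => a i + b i) = y a * y b := by
  intro a b ha hb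
  set M := momMat n d y with hM
  have hz0 : (∑ i, (0 : Fin n → ℕ) i) ≤ d := by simp
  set z : Idx n d := toIdx 0 hz0 with hz
  -- columns of M lie in range of mulVecLin
  have hcol : ∀ c : Idx n d, (fun a' => M a' c) ∈ LinearMap.range M.mulVecLin := by
    intro c
    refine ⟨Pi.single c 1, ?_⟩
    rw [Matrix.mulVecLin_apply, Matrix.mulVec_single]
    funext a'
    exact mul_one _
  have hMzz : M z z = 1 := by
    have : M z z = y 0 := by
      show y (fun i => ((0:ℕ) + 0)) = y 0
      norm_num
      rfl
    rw [this, hy0]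
  have hfin : Module.finrank ℝ (LinearMap.range M.mulVecLin) = 1 := hrank
  have hnz : (⟨fun a' => M a' z, hcol z⟩ : LinearMap.range M.mulVecLin) ≠ 0 := by
    intro hcontra
    have h2 := congrFun (congrArg Subtype.val hcontra) z
    simp only [ZeroMemClass.coe_zero, Pi.zero_apply] at h2
    rw [hMzz] at h2
    exact one_ne_zero h2
  have hkey : ∀ c : Idx n d, ∀ a' : Idx n d, M a' c = M z c * M a' z := by
    intro c a'
    obtain ⟨k, hk⟩ := (finrank_eq_one_iff_of_nonzero' _ hnz).mp hfin ⟨fun a'' => M a'' c, hcol c⟩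
    have hk' : ∀ x, k * M x z = M x c := fun x => congrFun (congrArg Subtype.val hk) x
    have hkz := hk' z
    rw [hMzz, mul_one] at hkz
    rw [← hk' a', hkz]
  have hab : M (toIdx a ha) (toIdx b hb) = y (fun i => a i + b i) := rfl
  have haz : M (toIdx a ha) z = y a := by
    show y (fun i => a i + 0) = y a
    simp
  have hzb : M z (toIdx b hb) = y b := by
    show y (fun i => 0 + b i) = y b
    simp
  rw [← hab, hkey (toIdx b hb) (toIdx a ha), haz, hzb, mul_comm]

lemma mono_add {n : ℕ} (u : Fin n → ℝ) (β γ : Fin n → ℕ) :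
    mono u (fun i => β i + γ i) = mono u β * mono u γ := by
  simp [mono, pow_add, Finset.prod_mul_distrib]

lemma factor_to_mono {n d : ℕ} (y : (Fin n → ℕ) → ℝ) (hy0 : y 0 = 1)
    (key : ∀ a b : Fin n → ℕ, (∑ i, a i) ≤ d → (∑ i, b i) ≤ d →
      y (fun i => a i + b i) = y a * y b) :
    ∀ s (α : Fin n → ℕ), (∑ i, α i) = s → s ≤ 2 * d →
      y α = mono (fun i => y (fun j => if j = i then 1 else 0)) α := by
  intro s
  induction s using Nat.strong_induction_on with
  | _ s ih =>
    intro α hs hle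
    set u : Fin n → ℝ := fun i => y (fun j => if j = i then 1 else 0) with hu
    rcases Nat.eq_zero_or_pos s with h0 | hpos
    · subst h0
      have hzero : ∀ i, α i = 0 := by
        intro i
        have := Finset.single_le_sum (f := α) (fun j _ => Nat.zero_le _) (Finset.mem_univ i)
        omega
      have hα : α = 0 := funext hzero
      rw [hα, hy0]
      simp [mono]
    · by_cases hsd : s ≤ d
      · -- peel off one unit
        obtain ⟨i, hi⟩ : ∃ i, α i ≠ 0 := by
          by_contra hc
          push_neg at hc
          have : ∑ i, α i = 0 := Finset.sum_eq_zero fun i _ => hc i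
          omega
        set α' := Function.update α i (α i - 1) with hα'
        set e : Fin n → ℕ := fun j => if j = i then 1 else 0 with he
        have hcs : ∑ j ∈ Finset.univ \ {i}, α j + α i = s := by
          have h2 := Finset.sum_compl_add_sum ({i} : Finset (Fin n)) α
          simp only [Finset.sum_singleton, Finset.compl_eq_univ_sdiff] at h2
          omega
        have hsum' : ∑ j, α' j = s - 1 := by
          rw [hα', Finset.sum_update_of_mem (Finset.mem_univ i)]
          omega
        have hsume : ∑ j, e j = 1 := by simp [he]
        have hdecomp : ∀ j, α j = α' j + e j := by
          intro j
          by_cases hj : j = i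
          · subst hj
            simp only [hα', Function.update_self, he, if_pos rfl]
            omega
          · simp only [hα', Function.update_of_ne hj, he, if_neg hj, Nat.add_zero]
        have hαeq : α = fun j => α' j + e j := funext hdecomp
        have h1 : y α = y α' * y e := by
          rw [hαeq]
          exact key α' e (le_trans (le_of_eq hsum') (by omega))
            (le_trans (le_of_eq hsume) (by omega))
        have h2 : y α' = mono u α' := ih (s - 1) (by omega) α' hsum' (by omega)
        have h3 : y e = u i := rfl
        have h4 : mono u e = u i := by
          simp [mono, he, pow_ite]
        rw [h1, h2, h3, hαeq, mono_add, h4]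
      · -- split into two halves
        obtain ⟨β, γ, hbg, hb, hg⟩ := split_deg s α hs hle
        have hαeq : α = fun j => β j + γ j := funext hbg
        have hsb : ∑ j, β j < s := by omega
        have hsg : ∑ j, γ j < s := by omega
        have h1 : y α = y β * y γ := by
          rw [hαeq]; exact key β γ hb hg
        have h2 : y β = mono u β := ih _ hsb β rfl (by omega)
        have h3 : y γ = mono u γ := ih _ hsg γ rfl (by omega)
        rw [h1, h2, h3, hαeq, mono_add]

/-- if `y₀ = 1` and the moment matrix `M_{d₀}[y]` is positive
semidefinite of rank one, then `y = [u]_{2d₀}` for `u = (y_{e₁},…,y_{eₙ})`. -/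
theorem stmt_7 (n d0 : ℕ) (y : (Fin n → ℕ) → ℝ)
    (hy0 : y 0 = 1)
    (hpsd : (momMat n d0 y).PosSemidef)
    (hrank : (momMat n d0 y).rank = 1) :
    ∀ α : Fin n → ℕ, (∑ i, α i) ≤ 2 * d0 →
      y α = mono (fun i => y (fun j => if j = i then 1 else 0)) α := by
  intro α hα
  exact factor_to_mono y hy0 (rank_one_factor y hy0 hrank) (∑ i, α i) α rfl hα
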